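/- Let (K, α) be a Z₂-simplicial complex on a vertex type V and let G = (W, E) be a graph. There exists a graph homomorphism from Csorba's graph A(K, α) to G if and only if there exists a Z₂-simplicial map from (K, α) to the box complex B(G). -/

import Mathlib

/-- A (finite abstract) simplicial complex on a vertex type `V`: a set of nonempty
finite subsets of `V`, closed under nonempty subsets and containing all singletons. -/
def IsComplex {V : Type*} (K : Set (Finset V)) : Prop :=
  (∀ σ ∈ K, σ.Nonempty) ∧ (∀ σ ∈ K, ∀ τ : Finset V, τ ⊆ σ → τ.Nonempty → τ ∈ K) ∧
    (∀ v : V, ({v} : Finset V) ∈ K)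

/-- A Z₂-simplicial complex: a simplicial complex together with a simplicial involution. -/
def IsZ2Complex {V : Type*} [DecidableEq V] (K : Set (Finset V)) (α : V → V) : Prop :=
  IsComplex K ∧ (∀ v, α (α v) = v) ∧ (∀ σ ∈ K, σ.image α ∈ K)

/-- The box complex `B(G)` of a graph `G = (W, E)`: simplices are the nonempty finite
subsets `σ` of `W × W` such that `E a b'` and `E a' b` hold for all `(a,b), (a',b') ∈ σ`.
Its involution is `Prod.swap`. -/
def BoxCpx {W : Type*} (E : W → W → Prop) : Set (Finset (W × W)) :=
  {σ | σ.Nonempty ∧ ∀ p ∈ σ, ∀ q ∈ σ, E p.1 q.2 ∧ E q.1 p.2}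

/-- A Z₂-simplicial map from `(K, α)` to `(L, β)`. -/
def IsZ2Map {V W : Type*} [DecidableEq W] (K : Set (Finset V)) (α : V → V)
    (L : Set (Finset W)) (β : W → W) (f : V → W) : Prop :=
  (∀ σ ∈ K, σ.image f ∈ L) ∧ (∀ v, f (α v) = β (f v))

/-!
A homomorphism `f : A(K, α) → G` gives the Z₂-map `v ↦ (f v, f (α v))` into `B(G)`, and a
Z₂-map `g : K → B(G)` gives the homomorphism `v ↦ (g v).1`. Both directions come down to
`α` mapping each edge `{a, b}` of `K` to the edge `{α a, α b}`, together with `α ∘ α = id`.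
-/

section

variable {V W : Type*}

theorem IsComplex.pair_mem [DecidableEq V] {K : Set (Finset V)} (hK : IsComplex K)
    {σ : Finset V} (hσ : σ ∈ K) {a b : V} (ha : a ∈ σ) (hb : b ∈ σ) : ({a, b} : Finset V) ∈ K :=
  hK.2.1 σ hσ _ (Finset.insert_subset ha (Finset.singleton_subset_iff.2 hb))
    (Finset.insert_nonempty _ _)

theorem IsZ2Complex.pair_map_mem [DecidableEq V] {K : Set (Finset V)} {α : V → V}
    (hK : IsZ2Complex K α) {a b : V} (h : ({a, b} : Finset V) ∈ K) :
    ({α a, α b} : Finset V) ∈ K := by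
  simpa only [Finset.image_insert, Finset.image_singleton] using hK.2.2 _ h

/-- The box condition is symmetric in the two pairs, so one relation per ordered pair suffices. -/
theorem image_mem_boxCpx [DecidableEq W] {E : W → W → Prop} {σ : Finset V} {g : V → W × W}
    (hσ : σ.Nonempty) (hg : ∀ v ∈ σ, ∀ w ∈ σ, E (g v).1 (g w).2) : σ.image g ∈ BoxCpx E := by
  refine ⟨hσ.image g, ?_⟩
  simp only [Finset.mem_image, forall_exists_index, and_imp, forall_apply_eq_imp_iff₂]
  exact fun v hv w hw => ⟨hg v hv w hw, hg w hw v hv⟩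

theorem BoxCpx.rel_of_mem {E : W → W → Prop} {τ : Finset (W × W)} (hτ : τ ∈ BoxCpx E)
    {p q : W × W} (hp : p ∈ τ) (hq : q ∈ τ) : E p.1 q.2 :=
  (hτ.2 p hp q hq).1

variable [DecidableEq V] [DecidableEq W] {K : Set (Finset V)} {α : V → V} {E : W → W → Prop}

theorem isZ2Map_boxCpx_of_hom (hK : IsZ2Complex K α) {f : V → W}
    (hf : ∀ v w : V, ({α v, w} : Finset V) ∈ K → E (f v) (f w)) :
    IsZ2Map K α (BoxCpx E) Prod.swap (fun v => (f v, f (α v))) := by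
  refine ⟨fun σ hσ => image_mem_boxCpx (hK.1.1 σ hσ) fun v hv w hw => ?_, fun v => ?_⟩
  · exact hf v (α w) (hK.pair_map_mem (hK.1.pair_mem hσ hv hw))
  · simp only [hK.2.1, Prod.swap_prod_mk]

theorem IsZ2Map.fst_hom_of_boxCpx (hK : IsZ2Complex K α) {g : V → W × W}
    (hg : IsZ2Map K α (BoxCpx E) Prod.swap g) {v w : V} (hvw : ({α v, w} : Finset V) ∈ K) :
    E (g v).1 (g w).1 := by
  have hmem : ({v, α w} : Finset V) ∈ K := by
    simpa only [hK.2.1] using hK.pair_map_mem hvw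
  have := BoxCpx.rel_of_mem (hg.1 _ hmem)
    (Finset.mem_image_of_mem g (Finset.mem_insert_self _ _))
    (Finset.mem_image_of_mem g (Finset.mem_insert_of_mem (Finset.mem_singleton_self _)))
  rwa [hg.2, Prod.snd_swap] at this

end

theorem stmt3_general {V W : Type*} [DecidableEq V] [DecidableEq W]
    (K : Set (Finset V)) (α : V → V) (hK : IsZ2Complex K α)
    (E : W → W → Prop) :
    (∃ f : V → W, ∀ v w : V, ({α v, w} : Finset V) ∈ K → E (f v) (f w)) ↔
    (∃ g : V → W × W, IsZ2Map K α (BoxCpx E) Prod.swap g) :=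
  ⟨fun ⟨_, hf⟩ => ⟨_, isZ2Map_boxCpx_of_hom hK hf⟩,
    fun ⟨g, hg⟩ => ⟨fun v => (g v).1, fun _ _ => hg.fst_hom_of_boxCpx hK⟩⟩

/-- There exists a graph homomorphism from Csorba's graph `A(K, α)` to `G = (W, E)`
if and only if there exists a Z₂-simplicial map from `(K, α)` to the box complex `B(G)`. -/
theorem stmt3 {V W : Type*} [DecidableEq V] [DecidableEq W]
    (K : Set (Finset V)) (α : V → V) (hK : IsZ2Complex K α)
    (E : W → W → Prop) (hEsymm : ∀ a b : W, E a b → E b a) :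
    (∃ f : V → W, ∀ v w : V, ({α v, w} : Finset V) ∈ K → E (f v) (f w)) ↔
    (∃ g : V → W × W, IsZ2Map K α (BoxCpx E) Prod.swap g) :=
  stmt3_general K α hK E
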